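/- For adjacent k-mers of a string s (the k-mers starting at positions i and i+1), their minimum p-substrings agree unless the position of every occurrence of min_p of the first k-mer is at its first position, or the new entering p-substring (the last p-substring of the second k-mer) is strictly smaller: formally, if min_p(s[i..i+k-1]) occurs at some start position j > i and the last p-substring of s[i+1..i+k] is not strictly smaller than min_p(s[i..i+k-1]), then min_p(s[i+1..i+k]) = min_p(s[i..i+k-1]). -/

import Mathlib

/-- `IsMinP p s t`: `t` is a lexicographically least length-`p` contiguous
substring of `s`. -/
def IsMinP {α : Type*} [LinearOrder α] (p : ℕ) (s t : List α) : Prop :=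
  t.length = p ∧ t <:+: s ∧ ∀ u : List α, u.length = p → u <:+: s → t ≤ u

theorem List.infix_take_drop_iff {α : Type*} {s u : List α} {a b : ℕ} :
    u <:+: (s.drop a).take b ↔
      ∃ j, a ≤ j ∧ j + u.length ≤ a + b ∧ (s.drop j).take u.length = u := by
  constructor
  · rintro ⟨x, y, hxy⟩
    have hlen := congrArg length hxy
    have hdrop : ((s.drop a).take b).drop x.length = u ++ y := by
      rw [← hxy, append_assoc, drop_left]
    rw [drop_take, drop_drop] at hdrop
    simp only [length_append, length_take, length_drop] at hlen
    refine ⟨a + x.length, by omega, by omega, ?_⟩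
    calc (s.drop (a + x.length)).take u.length
        = ((s.drop (a + x.length)).take (b - x.length)).take u.length := by
          rw [take_take, Nat.min_eq_left (by omega)]
      _ = u := by rw [hdrop, take_left]
  · rintro ⟨j, haj, hjb, hju⟩
    have hwindow : (s.drop j).take u.length = (((s.drop a).take b).drop (j - a)).take u.length := by
      rw [drop_take, drop_drop, take_take, Nat.add_sub_cancel' haj, Nat.min_eq_left (by omega)]
    rw [← hju, hwindow]
    exact (take_prefix _ _).isInfix.trans (drop_suffix _ _).isInfix

theorem minP_adjacent_windows_general {α : Type*} [LinearOrder α] (s : List α)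
    (p k i : ℕ)
    (m : List α) (hm : IsMinP p ((s.drop i).take k) m)
    (hocc : ∃ j : ℕ, i < j ∧ j + p ≤ i + k ∧ (s.drop j).take p = m)
    (henter : ¬ ((s.drop (i + 1 + k - p)).take p < m)) :
    IsMinP p ((s.drop (i + 1)).take k) m := by
  obtain ⟨hlen, -, hmin⟩ := hm
  obtain ⟨j, hij, hjk, hjm⟩ := hocc
  refine ⟨hlen, List.infix_take_drop_iff.2 ⟨j, by omega, by omega, by rw [hlen, hjm]⟩, ?_⟩
  intro u hu hinf
  obtain ⟨j', hj', hj'k, hj'u⟩ := List.infix_take_drop_iff.1 hinf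
  rw [hu] at hj'k hj'u
  by_cases hinside : j' + p ≤ i + k
  · exact hmin u hu (List.infix_take_drop_iff.2 ⟨j', by omega, by omega, by rw [hu, hj'u]⟩)
  · rw [← hj'u, show j' = i + 1 + k - p by omega]
    exact not_lt.mp henter

/-- If the minimum p-substring of the window at position `i` occurs at some start
position `j > i`, and the entering last p-substring of the window at `i+1` is not
strictly smaller, then the minimum p-substrings of the two adjacent windows agree. -/
theorem minP_adjacent_windows {α : Type*} [LinearOrder α] (s : List α)
    (p k i : ℕ) (hp : p ≤ k) (hk : i + 1 + k ≤ s.length)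
    (m : List α) (hm : IsMinP p ((s.drop i).take k) m)
    (hocc : ∃ j : ℕ, i < j ∧ j + p ≤ i + k ∧ (s.drop j).take p = m)
    (henter : ¬ ((s.drop (i + 1 + k - p)).take p < m)) :
    IsMinP p ((s.drop (i + 1)).take k) m :=
  minP_adjacent_windows_general s p k i m hm hocc henter
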